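/- The may- and must-testing preorders are compositional: if M₁ ⊑_may M₂ (respectively M₁ ⊑_must M₂) and N is a well-formed network such that both M₁ ⊛ N and M₂ ⊛ N are defined, then M₁ ⊛ N ⊑_may M₂ ⊛ N (respectively M₁ ⊛ N ⊑_must M₂ ⊛ N). -/
import Mathlib


open scoped ENNReal Classical

namespace PBC

/-! ### Sub-distributions -/

/-- A (raw) sub-distribution over `α`: a function into `ℝ≥0∞`. -/
abbrev SDist (α : Type) := α → ℝ≥0∞

/-- The mass of a sub-distribution. -/
noncomputable def mass {α : Type} (Δ : SDist α) : ℝ≥0∞ := ∑' a, Δ a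

/-- `Δ` is a probability sub-distribution: its mass is at most `1`. -/
def IsSubDist {α : Type} (Δ : SDist α) : Prop := mass Δ ≤ 1

/-- `Δ` is a (full) probability distribution: its mass is exactly `1`. -/
def IsDist {α : Type} (Δ : SDist α) : Prop := mass Δ = 1

/-- The point (Dirac) distribution at `a`. -/
noncomputable def dirac {α : Type} (a : α) : SDist α := fun b => if b = a then 1 else 0

/-- Pushforward of a sub-distribution along a function. -/
noncomputable def push {α β : Type} (f : α → β) (Δ : SDist α) : SDist β :=
  fun b => ∑' a, if f a = b then Δ a else 0

/-- Pushforward of a pair of sub-distributions along a binary function. -/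
noncomputable def push2 {α β γ : Type} (f : α → β → γ) (Δ : SDist α) (Θ : SDist β) : SDist γ :=
  fun c => ∑' q : α × β, if f q.1 q.2 = c then Δ q.1 * Θ q.2 else 0

/-- Lifting of a relation from states to sub-distributions, to a relation between
sub-distributions: the smallest relation containing the point-distribution instances of `R`
and closed under finite sub-convex combinations. -/
inductive Lift {α : Type} (R : α → SDist α → Prop) : SDist α → SDist α → Prop where
  | single {a : α} {Δ : SDist α} : R a Δ → Lift R (dirac a) Δ
  | sum {n : ℕ} (p : Fin n → ℝ≥0∞) (Δ Θ : Fin n → SDist α) :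
      (∑ i, p i) ≤ 1 → (∀ i, Lift R (Δ i) (Θ i)) →
      Lift R (fun a => ∑ i, p i * Δ i a) (fun a => ∑ i, p i * Θ i a)

/-- Lifting of a relation between states to a relation between sub-distributions. -/
def LiftRel {α : Type} (R : α → α → Prop) : SDist α → SDist α → Prop :=
  Lift fun a Θ => ∃ b, R a b ∧ Θ = dirac b

/-- Hyper-derivations, generically with respect to a (τ-)step relation `R` and a success
predicate `succ`: `Δ` splits as `go 0 + halt 0`, each `go k` makes a lifted `R`-step to
`go (k+1) + halt (k+1)`, the supports of the `go k` contain no successful states, and the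
result is `∑' k, halt k`. -/
def GHyper {α : Type} (R : α → SDist α → Prop) (succ : α → Prop) (Δ Δ' : SDist α) : Prop :=
  ∃ go halt : ℕ → SDist α,
    (∀ a, Δ a = go 0 a + halt 0 a) ∧
    (∀ k, Lift R (go k) (fun a => go (k + 1) a + halt (k + 1) a)) ∧
    (∀ k a, go k a ≠ 0 → ¬ succ a) ∧
    (∀ a, Δ' a = ∑' k, halt k a)

/-- Extreme derivatives: hyper-derivations whose resulting sub-distribution is supported on
states that are successful whenever they can still perform an `R`-step. -/
def GExtreme {α : Type} (R : α → SDist α → Prop) (succ : α → Prop) (Δ Δ' : SDist α) : Prop :=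
  GHyper R succ Δ Δ' ∧ ∀ a, Δ' a ≠ 0 → (∃ Θ, R a Θ) → succ a

/-! ### Probabilistic labelled transition systems -/

/-- A probabilistic labelled transition system over states `S` and actions `Act`:
a distinguished internal action `τ`, a transition relation into full distributions,
and a success predicate `ω`. -/
structure PLTS (S : Type) (Act : Type) where
  tau : Act
  trans : S → Act → SDist S → Prop
  trans_dist : ∀ s a Δ, trans s a Δ → IsDist Δ
  omega : S → Prop

/-- The internal step relation of a pLTS. -/
def PLTS.tauStep {S Act : Type} (L : PLTS S Act) : S → SDist S → Prop :=
  fun s Δ => L.trans s L.tau Δ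

/-- Hyper-derivations `Δ ⟹ Δ'` in a pLTS. -/
def HyperDeriv {S Act : Type} (L : PLTS S Act) : SDist S → SDist S → Prop :=
  GHyper L.tauStep L.omega

/-- Extreme derivatives `Δ ⟹≻ Δ'` in a pLTS. -/
def ExtremeDeriv {S Act : Type} (L : PLTS S Act) : SDist S → SDist S → Prop :=
  GExtreme L.tauStep L.omega

/-- A pLTS is convergent if no state has a hyper-derivation to the empty sub-distribution. -/
def Convergent {S Act : Type} (L : PLTS S Act) : Prop :=
  ∀ s : S, ¬ HyperDeriv L (dirac s) (fun _ => 0)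

end PBC
namespace PBC

/-! ### Syntax of the probabilistic broadcast calculus -/

abbrev Name := ℕ
abbrev Chan := ℕ
abbrev Val := ℕ
abbrev DefId := ℕ

/-- Probabilities: elements of `[0,1]`. -/
abbrev Prob := {q : ℝ≥0∞ // q ≤ 1}

mutual
  /-- States of the broadcast calculus: `nil`, the success clause `ω`, broadcast
  `c!⟨e⟩.p` (the closed expression `e` is represented by its value), receive `c?(x).p`
  (binding represented functionally), choice, matching (the closed boolean condition is
  represented by its value), `τ.p`, and recursive calls `A⟨ẽ⟩`. -/
  inductive PState : Type where
    | nil : PState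
    | success : PState
    | bcast : Chan → Val → Proc → PState
    | recv : Chan → (Val → Proc) → PState
    | choice : PState → PState → PState
    | mtch : Bool → PState → PState → PState
    | pre : Proc → PState
    | call : DefId → List Val → PState
  /-- Probabilistic processes: finite probabilistic choices over states. -/
  inductive Proc : Type where
    | st : PState → Proc
    | pchoice : Proc → Prob → Proc → Proc
end

/-- An environment of recursive definitions `A(x̃) ⇐ s`, presented in substituted form. -/
abbrev Env := DefId → List Val → PState

/-- The interpretation of a probabilistic process as a distribution over states. -/
noncomputable def Proc.interp : Proc → SDist PState
  | .st s => dirac s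
  | .pchoice p q r => fun t => q.1 * Proc.interp p t + (1 - q.1) * Proc.interp r t

/-! ### Pre-semantics of states -/

inductive SAct : Type where
  | out : Chan → Val → SAct
  | inp : Chan → Val → SAct
  | tau : SAct

/-- The pre-semantics of states. -/
inductive SStep (env : Env) : PState → SAct → SDist PState → Prop where
  | snd {c v p} : SStep env (.bcast c v p) (.out c v) (Proc.interp p)
  | rcv {c f v} : SStep env (.recv c f) (.inp c v) (Proc.interp (f v))
  | tau {p} : SStep env (.pre p) .tau (Proc.interp p)
  | sumL {s t α Δ} : SStep env s α Δ → SStep env (.choice s t) α Δ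
  | sumR {s t α Δ} : SStep env t α Δ → SStep env (.choice s t) α Δ
  | mthen {s t α Δ} : SStep env s α Δ → SStep env (.mtch true s t) α Δ
  | melse {s t α Δ} : SStep env t α Δ → SStep env (.mtch false s t) α Δ
  | call {A vs α Δ} : SStep env (env A vs) α Δ → SStep env (.call A vs) α Δ

/-! ### System terms, connectivity graphs and networks -/

/-- System terms: parallel compositions of located states. -/
inductive Sys : Type where
  | nil : Sys
  | node : Name → PState → Sys
  | par : Sys → Sys → Sys

/-- The multiset of node names occurring in a system term. -/
def Sys.nodesM : Sys → Multiset Name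
  | .nil => 0
  | .node n _ => {n}
  | .par M N => Sys.nodesM M + Sys.nodesM N

/-- The set of node names occurring in a system term. -/
def Sys.nodes (M : Sys) : Finset Name := M.nodesM.toFinset

/-- A connectivity graph: a finite digraph over node names. -/
structure Graph : Type where
  V : Finset Name
  E : Finset (Name × Name)

/-- A connectivity graph is ok if its edges join vertices and the edge relation is
irreflexive. -/
def Graph.ok (Γ : Graph) : Prop :=
  (∀ e ∈ Γ.E, e.1 ∈ Γ.V ∧ e.2 ∈ Γ.V) ∧ (∀ e ∈ Γ.E, e.1 ≠ e.2)

/-- Componentwise union of connectivity graphs. -/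
def Graph.union (Γ₁ Γ₂ : Graph) : Graph := ⟨Γ₁.V ∪ Γ₂.V, Γ₁.E ∪ Γ₂.E⟩

/-- A network: a connectivity graph together with a system term. -/
structure Net : Type where
  g : Graph
  sys : Sys

def Net.nodes (N : Net) : Finset Name := N.sys.nodes

/-- Validity of a network: the graph is a connectivity graph, each node name occurs at most
once in the system term, and all its nodes are vertices of the graph. -/
def Net.valid (N : Net) : Prop := N.g.ok ∧ N.sys.nodesM.Nodup ∧ N.nodes ⊆ N.g.V

/-- The interface of a network. -/
def Net.interf (N : Net) : Finset Name := N.g.V \ N.nodes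

/-- Input nodes: interface nodes with an edge to an internal node. -/
def Net.inp (N : Net) : Set Name := {i | i ∈ N.interf ∧ ∃ m ∈ N.nodes, (i, m) ∈ N.g.E}

/-- Output nodes: interface nodes with an edge from an internal node. -/
def Net.out (N : Net) : Set Name := {o | o ∈ N.interf ∧ ∃ m ∈ N.nodes, (m, o) ∈ N.g.E}

/-- Well-formed networks: valid, every edge has an internal endpoint, and every isolated
vertex is internal. -/
def Net.wf (N : Net) : Prop :=
  N.valid ∧ (∀ e ∈ N.g.E, e.1 ∈ N.nodes ∨ e.2 ∈ N.nodes) ∧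
    (∀ v ∈ N.g.V, (∀ w, (v, w) ∉ N.g.E ∧ (w, v) ∉ N.g.E) → v ∈ N.nodes)

/-- The composition `M ⊛ N` of two networks (as a total operation on the underlying data). -/
def Net.comp (M N : Net) : Net := ⟨M.g.union N.g, .par M.sys N.sys⟩

/-- `M ⊛ N` is defined exactly when `nodes(M) ∩ (Γ_N)_V = ∅`. -/
def Net.Defined (M N : Net) : Prop := ∀ n ∈ M.nodes, n ∉ N.g.V

/-! ### Structural congruence -/

/-- Structural congruence of states: commutative monoid laws for `+` and `nil`,
unfolding of matching and of recursive definitions. -/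
inductive SCong (env : Env) : PState → PState → Prop where
  | refl (s) : SCong env s s
  | symm {s t} : SCong env s t → SCong env t s
  | trans {s t u} : SCong env s t → SCong env t u → SCong env s u
  | comm (s t) : SCong env (.choice s t) (.choice t s)
  | assoc (s t u) : SCong env (.choice (.choice s t) u) (.choice s (.choice t u))
  | unit (s) : SCong env (.choice s .nil) s
  | cong {s s' t t'} : SCong env s s' → SCong env t t' →
      SCong env (.choice s t) (.choice s' t')
  | mthen (s t) : SCong env (.mtch true s t) s
  | melse (s t) : SCong env (.mtch false s t) t
  | unfold (A vs) : SCong env (.call A vs) (env A vs)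

/-- Structural congruence of system terms. -/
inductive PCong (env : Env) : Sys → Sys → Prop where
  | refl (M) : PCong env M M
  | symm {M N} : PCong env M N → PCong env N M
  | trans {M N L} : PCong env M N → PCong env N L → PCong env M L
  | comm (M N) : PCong env (.par M N) (.par N M)
  | assoc (M N L) : PCong env (.par (.par M N) L) (.par M (.par N L))
  | unit (M) : PCong env (.par M .nil) M
  | cong {M M' N N'} : PCong env M M' → PCong env N N' →
      PCong env (.par M N) (.par M' N')
  | node (n) {s t} : SCong env s t → PCong env (.node n s) (.node n t)

/-- Structural congruence of networks: same connectivity graph, congruent system terms. -/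
def NetCong (env : Env) (M N : Net) : Prop := M.g = N.g ∧ PCong env M.sys N.sys

/-! ### Intensional semantics of networks -/

inductive NAct : Type where
  | tau : Name → NAct
  | out : Name → Chan → Val → NAct
  | inp : Name → Chan → Val → NAct

/-- The intensional semantics of networks. -/
inductive IStep (env : Env) (Γ : Graph) : Sys → NAct → SDist Sys → Prop where
  | broad {s n c v Δ} : SStep env s (.out c v) Δ →
      IStep env Γ (.node n s) (.out n c v) (push (Sys.node n) Δ)
  | recv {s n m c v Δ} : SStep env s (.inp c v) Δ → (m, n) ∈ Γ.E →
      IStep env Γ (.node n s) (.inp m c v) (push (Sys.node n) Δ)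
  | deaf {s n m c v} : (∀ Δ, ¬ SStep env s (.inp c v) Δ) →
      IStep env Γ (.node n s) (.inp m c v) (dirac (.node n s))
  | disc {s n m c v} : (m, n) ∉ Γ.E →
      IStep env Γ (.node n s) (.inp m c v) (dirac (.node n s))
  | inil {m c v} : IStep env Γ .nil (.inp m c v) (dirac .nil)
  | taun {s n Δ} : SStep env s .tau Δ →
      IStep env Γ (.node n s) (.tau n) (push (Sys.node n) Δ)
  | taupL {M N n Δ} : IStep env Γ M (.tau n) Δ →
      IStep env Γ (.par M N) (.tau n) (push2 Sys.par Δ (dirac N))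
  | taupR {M N n Δ} : IStep env Γ N (.tau n) Δ →
      IStep env Γ (.par M N) (.tau n) (push2 Sys.par (dirac M) Δ)
  | prop {M N m c v Δ Θ} : IStep env Γ M (.inp m c v) Δ → IStep env Γ N (.inp m c v) Θ →
      IStep env Γ (.par M N) (.inp m c v) (push2 Sys.par Δ Θ)
  | syncL {M N m c v Δ Θ} : IStep env Γ M (.out m c v) Δ → IStep env Γ N (.inp m c v) Θ →
      IStep env Γ (.par M N) (.out m c v) (push2 Sys.par Δ Θ)
  | syncR {M N m c v Δ Θ} : IStep env Γ M (.inp m c v) Δ → IStep env Γ N (.out m c v) Θ →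
      IStep env Γ (.par M N) (.out m c v) (push2 Sys.par Δ Θ)

/-- A system term is ω-successful if it is congruent to `M' | n⟦ω + s⟧`. -/
def Successful (env : Env) (M : Sys) : Prop :=
  ∃ M' n s, PCong env M (.par M' (.node n (.choice .success s)))

/-- A network is ω-successful if its system term is. -/
def NetSucc (env : Env) (N : Net) : Prop := Successful env N.sys

/-! ### Extensional semantics -/

inductive EAct : Type where
  | tau : EAct
  | inp : Name → Chan → Val → EAct
  | out : Chan → Val → Set Name → EAct

/-- Lifting a distribution of system terms to a distribution of networks with a
fixed connectivity graph. -/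
noncomputable def netD (Γ : Graph) (Δ : SDist Sys) : SDist Net :=
  push (fun M => Net.mk Γ M) Δ

/-- The extensional semantics of networks. -/
inductive EStep (env : Env) : Net → EAct → SDist Net → Prop where
  | tauInt {Γ M m Δ} : ¬ Successful env M → IStep env Γ M (.tau m) Δ →
      EStep env (Net.mk Γ M) .tau (netD Γ Δ)
  | tauOut {Γ M m c v Δ} : ¬ Successful env M → IStep env Γ M (.out m c v) Δ →
      (∀ n, (m, n) ∈ Γ.E → n ∈ M.nodes) →
      EStep env (Net.mk Γ M) .tau (netD Γ Δ)
  | inp {Γ M n c v Δ} : ¬ Successful env M → IStep env Γ M (.inp n c v) Δ →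
      n ∈ Net.inp (Net.mk Γ M) →
      EStep env (Net.mk Γ M) (.inp n c v) (netD Γ Δ)
  | out {Γ M m c v Δ η} : ¬ Successful env M → IStep env Γ M (.out m c v) Δ →
      η = {n | n ∈ Net.out (Net.mk Γ M) ∧ (m, n) ∈ Γ.E} → η ≠ ∅ →
      EStep env (Net.mk Γ M) (.out c v η) (netD Γ Δ)

/-! ### The testing structure on networks -/

/-- The reduction relation of the testing structure associated with networks. -/
def Red (env : Env) (N : Net) (Δ : SDist Net) : Prop :=
  ∃ Θ : SDist Sys, Δ = netD N.g Θ ∧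
    ((∃ m, IStep env N.g N.sys (.tau m) Θ) ∨ ∃ m c v, IStep env N.g N.sys (.out m c v) Θ)

/-- The value of a sub-distribution of networks: its mass on successful networks. -/
noncomputable def Value (env : Env) (Δ : SDist Net) : ℝ≥0∞ :=
  ∑' N : Net, if NetSucc env N then Δ N else 0

/-- The set of possible results of a sub-distribution of networks. -/
def Results (env : Env) (Δ : SDist Net) : Set ℝ≥0∞ :=
  {v | ∃ Δ', GExtreme (Red env) (NetSucc env) Δ Δ' ∧ v = Value env Δ'}

/-- The closure of a network: delete all interface vertices and edges incident to them. -/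
noncomputable def Net.cl (N : Net) : Net :=
  ⟨⟨N.nodes, N.g.E.filter fun e => e.1 ∈ N.nodes ∧ e.2 ∈ N.nodes⟩, N.sys⟩

/-! ### Weak extensional actions -/

/-- Weak internal actions: hyper-derivations in the extensional pLTS. -/
def WTau (env : Env) : SDist Net → SDist Net → Prop :=
  GHyper (fun N Δ => EStep env N .tau Δ) (NetSucc env)

/-- Strong extensional actions lifted to sub-distributions. -/
def LiftE (env : Env) (α : EAct) : SDist Net → SDist Net → Prop :=
  Lift fun N Δ => EStep env N α Δ

/-- Weak extensional input actions. -/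
def WInp (env : Env) (n : Name) (c : Chan) (v : Val) (Δ Θ : SDist Net) : Prop :=
  ∃ Δ₁ Δ₂, WTau env Δ Δ₁ ∧ LiftE env (.inp n c v) Δ₁ Δ₂ ∧ WTau env Δ₂ Θ

/-- Weak extensional output actions: a broadcast may be simulated by a multicast
whose sets of target nodes partition the original one. -/
inductive WOut (env : Env) (c : Chan) (v : Val) : Set Name → SDist Net → SDist Net → Prop where
  | single {η Δ Δ₁ Δ₂ Θ} : WTau env Δ Δ₁ → LiftE env (.out c v η) Δ₁ Δ₂ → WTau env Δ₂ Θ →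
      WOut env c v η Δ Θ
  | comp {η₁ η₂ Δ Δ' Θ} : WOut env c v η₁ Δ Δ' → WOut env c v η₂ Δ' Θ → η₁ ∩ η₂ = ∅ →
      WOut env c v (η₁ ∪ η₂) Δ Θ

/-- Weak extensional actions. -/
def Weak (env : Env) : EAct → SDist Net → SDist Net → Prop
  | .tau => WTau env
  | .inp n c v => WInp env n c v
  | .out c v η => WOut env c v η

end PBC
namespace PBC

/-! ### Simulations -/

/-- The defining closure property of simulations between well-formed networks. -/
def SimClosed (env : Env) (R : Net → Net → Prop) : Prop :=
  ∀ M N, R M N →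
    M.wf ∧ N.wf ∧ M.inp = N.inp ∧ M.out = N.out ∧
    (Successful env M.sys →
      ∃ Θ, Weak env .tau (dirac N) Θ ∧ ∀ L, Θ L ≠ 0 → Successful env L.sys) ∧
    (¬ Successful env M.sys →
      ∀ α Δ, Weak env α (dirac M) Δ → ∃ Θ, Weak env α (dirac N) Θ ∧ LiftRel R Δ Θ)

/-- The simulation preorder: the largest relation satisfying `SimClosed`. -/
def Sim (env : Env) (M N : Net) : Prop := ∃ R, SimClosed env R ∧ R M N

/-- The defining closure property of simple simulations: only strong actions of the
simulated network need be matched. -/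
def SimSClosed (env : Env) (R : Net → Net → Prop) : Prop :=
  ∀ M N, R M N →
    M.wf ∧ N.wf ∧ M.inp = N.inp ∧ M.out = N.out ∧
    (Successful env M.sys →
      ∃ Θ, Weak env .tau (dirac N) Θ ∧ ∀ L, Θ L ≠ 0 → Successful env L.sys) ∧
    (¬ Successful env M.sys →
      ∀ α Δ, EStep env M α Δ → ∃ Θ, Weak env α (dirac N) Θ ∧ LiftRel R Δ Θ)

/-- The simple simulation preorder. -/
def SimS (env : Env) (M N : Net) : Prop := ∃ R, SimSClosed env R ∧ R M N

/-! ### Finitary networks -/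

/-- One network follows another in the extensional pLTS. -/
def ENext (env : Env) (M N : Net) : Prop := ∃ α Δ, EStep env M α Δ ∧ Δ N ≠ 0

/-- The part of the extensional pLTS generated by (reachable from) a network. -/
def Reach (env : Env) (M : Net) : Set Net := {N | Relation.ReflTransGen (ENext env) M N}

/-- A network is finitary if the extensional pLTS it generates is finite-state and
finite-branching. -/
def Finitary (env : Env) (M : Net) : Prop :=
  (Reach env M).Finite ∧ ∀ N ∈ Reach env M, {Δ | ∃ α, EStep env N α Δ}.Finite

/-! ### Deadlock and deadlock simulations -/

/-- A network is deadlocked: not successful, and without extensional `τ`- or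
output actions. -/
def Deadlocked (env : Env) (M : Net) : Prop :=
  ¬ Successful env M.sys ∧ (∀ Δ, ¬ EStep env M .tau Δ) ∧
    ∀ c v η Δ, ¬ EStep env M (.out c v η) Δ

/-- The defining closure property of deadlock simulations, relating networks to
sub-distributions of networks. -/
def DSimClosed (env : Env) (R : Net → SDist Net → Prop) : Prop :=
  ∀ M Θ, R M Θ →
    (Deadlocked env M → ∃ Θ', WTau env Θ Θ' ∧ ∀ N, Θ' N ≠ 0 → Deadlocked env N) ∧
    (∀ α Δ, Weak env α (dirac M) Δ → ∃ Θ', Weak env α Θ Θ' ∧ Lift R Δ Θ')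

/-- The deadlock simulation preorder `M ⊴_d Θ`. -/
def DSim (env : Env) (M : Net) (Θ : SDist Net) : Prop := ∃ R, DSimClosed env R ∧ R M Θ

/-- The defining closure property of divergence-free deadlock simulations, relating
networks to networks. -/
def DFSimClosed (env : Env) (R : Net → Net → Prop) : Prop :=
  ∀ M N, R M N →
    (Deadlocked env M → ∃ Θ, WTau env (dirac N) Θ ∧ ∀ L, Θ L ≠ 0 → Deadlocked env L) ∧
    (∀ α Δ, Weak env α (dirac M) Δ → ∃ Θ, Weak env α (dirac N) Θ ∧ LiftRel R Δ Θ)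

/-- The divergence-free deadlock simulation preorder `M ⊴_df N`. -/
def DFSim (env : Env) (M N : Net) : Prop := ∃ R, DFSimClosed env R ∧ R M N

/-- A network is convergent if no state of its generated extensional pLTS has a
hyper-derivation to the empty sub-distribution. -/
def NetConvergent (env : Env) (M : Net) : Prop :=
  ∀ N ∈ Reach env M, ¬ WTau env (dirac N) (fun _ => 0)

/-! ### Testing preorders -/

/-- Hoare preorder on sets of outcomes. -/
def HoareLe (O₁ O₂ : Set ℝ≥0∞) : Prop := ∀ p₁ ∈ O₁, ∃ p₂ ∈ O₂, p₁ ≤ p₂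

/-- Smyth preorder on sets of outcomes. -/
def SmythLe (O₁ O₂ : Set ℝ≥0∞) : Prop := ∀ p₂ ∈ O₂, ∃ p₁ ∈ O₁, p₁ ≤ p₂

/-- The may-testing preorder between well-formed networks with the same input and
output nodes. -/
def MayLe (env : Env) (M₁ M₂ : Net) : Prop :=
  M₁.wf ∧ M₂.wf ∧ M₁.inp = M₂.inp ∧ M₁.out = M₂.out ∧
    ∀ T, T.wf → M₁.Defined T → M₂.Defined T →
      HoareLe (Results env (dirac (M₁.comp T))) (Results env (dirac (M₂.comp T)))

/-- The must-testing preorder between well-formed networks with the same input and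
output nodes. -/
def MustLe (env : Env) (M₁ M₂ : Net) : Prop :=
  M₁.wf ∧ M₂.wf ∧ M₁.inp = M₂.inp ∧ M₁.out = M₂.out ∧
    ∀ T, T.wf → M₁.Defined T → M₂.Defined T →
      SmythLe (Results env (dirac (M₁.comp T))) (Results env (dirac (M₂.comp T)))

/-! ### Renaming, node-stability and properness -/

/-- Renaming node names in a system term. -/
def Sys.rename (σ : Name → Name) : Sys → Sys
  | .nil => .nil
  | .node n s => .node (σ n) s
  | .par M N => .par (Sys.rename σ M) (Sys.rename σ N)

/-- Renaming node names in a connectivity graph along a permutation. -/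
def Graph.rename (σ : Equiv.Perm Name) (Γ : Graph) : Graph :=
  ⟨Γ.V.image σ, Γ.E.image fun e => (σ e.1, σ e.2)⟩

/-- Renaming node names in a network along a permutation. -/
def Net.rename (σ : Equiv.Perm Name) (N : Net) : Net :=
  ⟨N.g.rename σ, N.sys.rename σ⟩

/-- A sub-distribution of networks is node-stable if all networks in its support share
the same connectivity graph and the same node set. -/
def NodeStable (Θ : SDist Net) : Prop :=
  ∀ L L', Θ L ≠ 0 → Θ L' ≠ 0 → L.g = L'.g ∧ L.nodes = L'.nodes

mutual
  /-- A state contains an occurrence of the success clause `ω`. -/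
  inductive PState.hasOmega : PState → Prop where
    | success : PState.hasOmega .success
    | bcast {c v p} : Proc.hasOmega p → PState.hasOmega (.bcast c v p)
    | recv {c f} (v : Val) : Proc.hasOmega (f v) → PState.hasOmega (.recv c f)
    | choiceL {s t} : PState.hasOmega s → PState.hasOmega (.choice s t)
    | choiceR {s t} : PState.hasOmega t → PState.hasOmega (.choice s t)
    | mtchL {b s t} : PState.hasOmega s → PState.hasOmega (.mtch b s t)
    | mtchR {b s t} : PState.hasOmega t → PState.hasOmega (.mtch b s t)
    | pre {p} : Proc.hasOmega p → PState.hasOmega (.pre p)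
  /-- A process contains an occurrence of the success clause `ω`. -/
  inductive Proc.hasOmega : Proc → Prop where
    | st {s} : PState.hasOmega s → Proc.hasOmega (.st s)
    | pchoiceL {p q r} : Proc.hasOmega p → Proc.hasOmega (.pchoice p q r)
    | pchoiceR {p q r} : Proc.hasOmega r → Proc.hasOmega (.pchoice p q r)
end

/-- A system term contains an occurrence of the success clause `ω`. -/
inductive Sys.hasOmega : Sys → Prop where
  | node {n s} : PState.hasOmega s → Sys.hasOmega (.node n s)
  | parL {M N} : Sys.hasOmega M → Sys.hasOmega (.par M N)
  | parR {M N} : Sys.hasOmega N → Sys.hasOmega (.par M N)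

/-- A network is proper if its system term contains no occurrence of `ω`. -/
def Net.proper (N : Net) : Prop := ¬ N.sys.hasOmega

end PBC
namespace PBC

/-! ### Auxiliary lemmas for compositionality -/

section PushAlgebra

variable {α β γ : Type}

lemma tsum_ite_eq_fun (a : α) (f : α → ℝ≥0∞) : (∑' b, if b = a then f b else 0) = f a := by
  rw [tsum_eq_single a fun b hb => by simp [hb]]; simp

lemma push_dirac' (f : α → β) (a : α) : push f (dirac a) = dirac (f a) := by
  funext b
  unfold push dirac
  rw [tsum_eq_single a fun b' hb => by simp [hb]]
  simp [eq_comm]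

lemma push_push (f : α → β) (g : β → γ) (Δ : SDist α) :
    push g (push f Δ) = push (g ∘ f) Δ := by
  funext c
  unfold push
  calc (∑' b, if g b = c then (∑' a, if f a = b then Δ a else 0) else 0)
      = ∑' b, ∑' a, if g b = c then (if f a = b then Δ a else 0) else 0 := by
        refine tsum_congr fun b => ?_
        split <;> simp
    _ = ∑' a, ∑' b, if g b = c then (if f a = b then Δ a else 0) else 0 :=
        ENNReal.tsum_comm
    _ = ∑' a, if g (f a) = c then Δ a else 0 := by
        refine tsum_congr fun a => ?_
        rw [tsum_eq_single (f a) fun b hb => by simp [Ne.symm hb]]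
        simp

lemma push_support {f : α → β} {Δ : SDist α} {b : β} (h : push f Δ b ≠ 0) :
    ∃ a, Δ a ≠ 0 ∧ f a = b := by
  by_contra hc
  push_neg at hc
  apply h
  unfold push
  refine ENNReal.tsum_eq_zero.2 fun a => ?_
  split
  · rcases eq_or_ne (Δ a) 0 with h0 | h0
    · exact h0
    · exact absurd ‹f a = b› (hc a h0)
  · rfl

lemma push_fix {f : α → α} {Δ : SDist α} (h : ∀ a, Δ a ≠ 0 → f a = a) : push f Δ = Δ := by
  funext b
  unfold push
  calc (∑' a, if f a = b then Δ a else 0) = ∑' a, if a = b then Δ a else 0 := by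
        refine tsum_congr fun a => ?_
        rcases eq_or_ne (Δ a) 0 with h0 | h0
        · split <;> split <;> simp [h0]
        · rw [h a h0]
    _ = Δ b := tsum_ite_eq_fun b Δ

lemma push_add (f : α → β) (Δ Θ : SDist α) :
    push f (fun a => Δ a + Θ a) = fun b => push f Δ b + push f Θ b := by
  funext b
  unfold push
  rw [← ENNReal.tsum_add]
  refine tsum_congr fun a => ?_
  split <;> simp

lemma push_tsum (f : α → β) (Δ : ℕ → SDist α) :
    push f (fun a => ∑' k, Δ k a) = fun b => ∑' k, push f (Δ k) b := by
  funext b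
  unfold push
  calc (∑' a, if f a = b then (∑' k, Δ k a) else 0)
      = ∑' a, ∑' k, if f a = b then Δ k a else 0 := by
        refine tsum_congr fun a => ?_
        split <;> simp
    _ = ∑' k, ∑' a, if f a = b then Δ k a else 0 := ENNReal.tsum_comm

lemma push_finsum (f : α → β) {n : ℕ} (p : Fin n → ℝ≥0∞) (Δ : Fin n → SDist α) :
    push f (fun a => ∑ i, p i * Δ i a) = fun b => ∑ i, p i * push f (Δ i) b := by
  funext b
  unfold push
  calc (∑' a, if f a = b then (∑ i, p i * Δ i a) else 0)
      = ∑' a, ∑ i, if f a = b then p i * Δ i a else 0 := by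
        refine tsum_congr fun a => ?_
        split <;> simp
    _ = ∑ i, ∑' a, if f a = b then p i * Δ i a else 0 := by
        exact Summable.tsum_finsetSum fun i _ => ENNReal.summable
    _ = ∑ i, p i * ∑' a, if f a = b then Δ i a else 0 := by
        refine Finset.sum_congr rfl fun i _ => ?_
        rw [← ENNReal.tsum_mul_left]
        refine tsum_congr fun a => ?_
        split <;> simp

end PushAlgebra

section Push2Algebra

variable {α β γ δ : Type}

lemma push2_eq_push (f : α → β → γ) (Δ : SDist α) (Θ : SDist β) :
    push2 f Δ Θ = push (fun q : α × β => f q.1 q.2) (fun q => Δ q.1 * Θ q.2) := rfl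

lemma push_reindex {α β γ : Type} (e : α ≃ β) (f : β → γ) (Δ : SDist β) :
    push (f ∘ e) (Δ ∘ e) = push f Δ := by
  funext c
  exact Equiv.tsum_eq e (fun b => if f b = c then Δ b else 0)


lemma push_congr_equiv {α β γ : Type} (e : α ≃ β) (f : α → γ) (g : β → γ)
    (Δ : SDist α) (Θ : SDist β) (hf : ∀ a, f a = g (e a)) (hΔ : ∀ a, Δ a = Θ (e a)) :
    push f Δ = push g Θ := by
  funext c
  unfold push
  rw [← Equiv.tsum_eq e (fun b => if g b = c then Θ b else 0)]
  exact tsum_congr fun a => by rw [hf, hΔ]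

lemma pushmul_left (f : α → β) (Δ : SDist α) (Θ : SDist γ) :
    (fun q : β × γ => push f Δ q.1 * Θ q.2) =
      push (fun q : α × γ => ((f q.1, q.2) : β × γ)) (fun q => Δ q.1 * Θ q.2) := by
  funext q
  unfold push
  beta_reduce
  refine Eq.symm ((ENNReal.tsum_prod (f := fun (a : α) (c : γ) =>
      @ite ℝ≥0∞ (((f a, c) : β × γ) = q) (Classical.propDecidable _) (Δ a * Θ c) 0)).trans ?_)
  calc (∑' (a : α) (c : γ),
        @ite ℝ≥0∞ (((f a, c) : β × γ) = q) (Classical.propDecidable _) (Δ a * Θ c) 0)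
    
      = ∑' (a : α), if f a = q.1 then Δ a * Θ q.2 else 0 := by
        refine tsum_congr fun a => ?_
        rw [tsum_eq_single q.2 fun c hc => by
          simp only [Prod.ext_iff]; exact if_neg fun h => hc h.2]
        simp [Prod.ext_iff]
    _ = (∑' (a : α), if f a = q.1 then Δ a else 0) * Θ q.2 := by
        rw [← ENNReal.tsum_mul_right]
        refine tsum_congr fun a => ?_
        split <;> simp

lemma pushmul_right (f : β → γ) (Δ : SDist α) (Θ : SDist β) :
    (fun q : α × γ => Δ q.1 * push f Θ q.2) =
      push (fun q : α × β => ((q.1, f q.2) : α × γ)) (fun q => Δ q.1 * Θ q.2) := by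
  funext q
  unfold push
  beta_reduce
  refine Eq.symm ((ENNReal.tsum_prod (f := fun (a : α) (b : β) =>
      @ite ℝ≥0∞ (((a, f b) : α × γ) = q) (Classical.propDecidable _) (Δ a * Θ b) 0)).trans ?_)
  calc (∑' (a : α) (b : β),
        @ite ℝ≥0∞ (((a, f b) : α × γ) = q) (Classical.propDecidable _) (Δ a * Θ b) 0)
    
      = ∑' (a : α), if a = q.1 then Δ a * (∑' b, if f b = q.2 then Θ b else 0) else 0 := by
        refine tsum_congr fun a => ?_
        rcases eq_or_ne a q.1 with ha | ha
        · subst ha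
          simp only [if_pos rfl]
          rw [← ENNReal.tsum_mul_left]
          refine tsum_congr fun b => ?_
          simp only [Prod.ext_iff]
          rcases eq_or_ne (f b) q.2 with hb | hb <;> simp [hb]
        · rw [if_neg ha]
          refine ENNReal.tsum_eq_zero.2 fun b => ?_
          simp only [Prod.ext_iff]
          exact if_neg fun h => ha h.1
    _ = Δ q.1 * (∑' b, if f b = q.2 then Θ b else 0) := by
        rw [tsum_ite_eq_fun q.1 (fun a => Δ a * _)]

lemma push2_dirac_dirac (f : α → β → γ) (a : α) (b : β) :
    push2 f (dirac a) (dirac b) = dirac (f a b) := by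
  rw [push2_eq_push]
  have : (fun q : α × β => dirac a q.1 * dirac b q.2) = dirac (a, b) := by
    funext q
    simp only [dirac, Prod.ext_iff]
    rcases eq_or_ne q.1 a with h1 | h1 <;> rcases eq_or_ne q.2 b with h2 | h2 <;>
      simp [h1, h2]
  rw [this, push_dirac' _ (a, b)]

lemma push2_support {f : α → β → γ} {Δ : SDist α} {Θ : SDist β} {c : γ}
    (h : push2 f Δ Θ c ≠ 0) : ∃ a b, Δ a ≠ 0 ∧ Θ b ≠ 0 ∧ f a b = c := by
  rw [push2_eq_push] at h
  obtain ⟨q, hq, hfq⟩ := push_support h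
  rcases mul_eq_zero.not.1 hq with h'
  push_neg at h'
  exact ⟨q.1, q.2, h'.1, h'.2, hfq⟩

lemma push2_reassoc (h : Sys → Sys)
    (hh : ∀ a b c : Sys, h (.par (.par a b) c) = .par a (.par b c))
    (Δ₁ Δ₂ Δ₃ : SDist Sys) :
    push h (push2 .par (push2 .par Δ₁ Δ₂) Δ₃) = push2 .par Δ₁ (push2 .par Δ₂ Δ₃) := by
  rw [push2_eq_push Sys.par (push2 Sys.par Δ₁ Δ₂) Δ₃, push2_eq_push Sys.par Δ₁ Δ₂,
    pushmul_left, push_push, push_push,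
    push2_eq_push Sys.par Δ₁ (push2 Sys.par Δ₂ Δ₃), push2_eq_push Sys.par Δ₂ Δ₃,
    pushmul_right, push_push]
  exact push_congr_equiv (Equiv.prodAssoc Sys Sys Sys) _ _ _ _
    (fun p => by simp [Equiv.prodAssoc, hh]) (fun p => by simp [Equiv.prodAssoc, mul_assoc])

lemma push2_reassoc' (h : Sys → Sys)
    (hh : ∀ a b c : Sys, h (.par a (.par b c)) = .par (.par a b) c)
    (Δ₁ Δ₂ Δ₃ : SDist Sys) :
    push h (push2 .par Δ₁ (push2 .par Δ₂ Δ₃)) = push2 .par (push2 .par Δ₁ Δ₂) Δ₃ := by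
  rw [push2_eq_push Sys.par Δ₁ (push2 Sys.par Δ₂ Δ₃), push2_eq_push Sys.par Δ₂ Δ₃,
    pushmul_right, push_push, push_push,
    push2_eq_push Sys.par (push2 Sys.par Δ₁ Δ₂) Δ₃, push2_eq_push Sys.par Δ₁ Δ₂,
    pushmul_left, push_push]
  exact push_congr_equiv (Equiv.prodAssoc Sys Sys Sys).symm _ _ _ _
    (fun p => by simp [Equiv.prodAssoc, hh]) (fun p => by simp [Equiv.prodAssoc, mul_assoc])

end Push2Algebra

section Assoc

/-- Reassociate a parallel composition to the right (at the top level only). -/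
def assocL : Sys → Sys
  | .par (.par a b) c => .par a (.par b c)
  | s => s

/-- Reassociate a parallel composition to the left (at the top level only). -/
def assocR : Sys → Sys
  | .par a (.par b c) => .par (.par a b) c
  | s => s

@[simp] lemma assocL_ppc (a b c : Sys) : assocL (.par (.par a b) c) = .par a (.par b c) := rfl
@[simp] lemma assocR_ppc (a b c : Sys) : assocR (.par a (.par b c)) = .par (.par a b) c := rfl

/-- A system term that is not a parallel composition. -/
def NotPar (s : Sys) : Prop := ∀ a b : Sys, s ≠ .par a b

lemma assocL_fix {u : Sys} (hu : NotPar u) (v : Sys) : assocL (.par u v) = .par u v := by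
  cases u with
  | nil => rfl
  | node n t => rfl
  | par a b => exact absurd rfl (hu a b)

lemma assocR_fix (u : Sys) {v : Sys} (hv : NotPar v) : assocR (.par u v) = .par u v := by
  cases v with
  | nil => rfl
  | node n t => rfl
  | par a b => exact absurd rfl (hv a b)

@[simp] lemma assocL_nil : assocL .nil = .nil := rfl
@[simp] lemma assocR_nil : assocR .nil = .nil := rfl
@[simp] lemma assocL_node (n : Name) (s : PState) : assocL (.node n s) = .node n s := rfl
@[simp] lemma assocR_node (n : Name) (s : PState) : assocR (.node n s) = .node n s := rfl

lemma dirac_support {a x : α} (hx : dirac a x ≠ 0) : x = a := by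
  by_contra h; exact hx (by simp [dirac, h])

/-- Support of the distribution reached by a step from `nil` or a single node
consists of non-parallel terms. -/
lemma istep_notPar_support {env : Env} {Γ : Graph} {s : Sys} {α : NAct} {Δ : SDist Sys}
    (hs : NotPar s) (h : IStep env Γ s α Δ) : ∀ x, Δ x ≠ 0 → NotPar x := by
  cases h with
  | broad h =>
      intro x hx; obtain ⟨a, _, rfl⟩ := push_support hx; exact fun u v h => by cases h
  | recv h hE =>
      intro x hx; obtain ⟨a, _, rfl⟩ := push_support hx; exact fun u v h => by cases h
  | deaf h => intro x hx; rw [dirac_support hx]; exact hs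
  | disc h => intro x hx; rw [dirac_support hx]; exact hs
  | inil => intro x hx; rw [dirac_support hx]; exact hs
  | taun h =>
      intro x hx; obtain ⟨a, _, rfl⟩ := push_support hx; exact fun u v h => by cases h
  | taupL h => exact absurd rfl (hs _ _)
  | taupR h => exact absurd rfl (hs _ _)
  | prop h1 h2 => exact absurd rfl (hs _ _)
  | syncL h1 h2 => exact absurd rfl (hs _ _)
  | syncR h1 h2 => exact absurd rfl (hs _ _)

/-- assocL fixes any distribution supported on terms `par u v` with `u` not a `par`. -/
lemma push_assocL_fix {Δ₁ Δ₂ : SDist Sys} (h₁ : ∀ x, Δ₁ x ≠ 0 → NotPar x) :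
    push assocL (push2 .par Δ₁ Δ₂) = push2 .par Δ₁ Δ₂ := by
  refine push_fix fun x hx => ?_
  obtain ⟨a, b, ha, _, rfl⟩ := push2_support hx
  exact assocL_fix (h₁ a ha) b

lemma push_assocR_fix {Δ₁ Δ₂ : SDist Sys} (h₂ : ∀ x, Δ₂ x ≠ 0 → NotPar x) :
    push assocR (push2 .par Δ₁ Δ₂) = push2 .par Δ₁ Δ₂ := by
  refine push_fix fun x hx => ?_
  obtain ⟨a, b, _, hb, rfl⟩ := push2_support hx
  exact assocR_fix a (h₂ b hb)

/-- Equivariance of the intensional semantics under right reassociation. -/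
lemma istep_assocL {env : Env} {Γ : Graph} {s : Sys} {α : NAct} {Δ : SDist Sys}
    (h : IStep env Γ s α Δ) : IStep env Γ (assocL s) α (push assocL Δ) := by
  cases s with
  | nil =>
      cases h with
      | inil => rw [push_dirac']; exact .inil
  | node n t =>
      cases h with
      | broad h' => rw [push_push]; exact .broad h'
      | recv h' hE => rw [push_push]; exact .recv h' hE
      | deaf h' => rw [push_dirac']; exact .deaf h'
      | disc h' => rw [push_dirac']; exact .disc h'
      | taun h' => rw [push_push]; exact .taun h'
  | par X C =>
    have fix : ∀ {u v : Sys} {β Θ}, NotPar u → IStep env Γ (.par u v) β Θ →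
        IStep env Γ (assocL (.par u v)) β (push assocL Θ) := by
      intro u v β Θ hu hst
      rw [assocL_fix hu]
      cases hst with
      | taupL h' => rw [push_assocL_fix (istep_notPar_support hu h')]; exact .taupL h'
      | taupR h' =>
          rw [push_assocL_fix (fun x hx => by rw [dirac_support hx]; exact hu)]
          exact .taupR h'
      | prop h1 h2 => rw [push_assocL_fix (istep_notPar_support hu h1)]; exact .prop h1 h2
      | syncL h1 h2 => rw [push_assocL_fix (istep_notPar_support hu h1)]; exact .syncL h1 h2
      | syncR h1 h2 => rw [push_assocL_fix (istep_notPar_support hu h1)]; exact .syncR h1 h2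
    cases X with
    | nil => exact fix (fun a b h => by cases h) h
    | node n t => exact fix (fun a b h => by cases h) h
    | par A B =>
      cases h with
      | taupL h1 =>
          cases h1 with
          | taupL hA =>
              rw [push2_reassoc assocL (fun a b c => rfl), push2_dirac_dirac]
              exact .taupL hA
          | taupR hB =>
              rw [push2_reassoc assocL (fun a b c => rfl)]
              exact .taupR (.taupL hB)
      | taupR hC =>
          rw [show dirac (Sys.par A B) = push2 .par (dirac A) (dirac B) from
            (push2_dirac_dirac _ _ _).symm, push2_reassoc assocL (fun a b c => rfl)]
          exact .taupR (.taupR hC)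
      | prop h1 h2 =>
          cases h1 with
          | prop hA hB =>
              rw [push2_reassoc assocL (fun a b c => rfl)]
              exact .prop hA (.prop hB h2)
      | syncL h1 h2 =>
          cases h1 with
          | syncL hA hB =>
              rw [push2_reassoc assocL (fun a b c => rfl)]
              exact .syncL hA (.prop hB h2)
          | syncR hA hB =>
              rw [push2_reassoc assocL (fun a b c => rfl)]
              exact .syncR hA (.syncL hB h2)
      | syncR h1 h2 =>
          cases h1 with
          | prop hA hB =>
              rw [push2_reassoc assocL (fun a b c => rfl)]
              exact .syncR hA (.syncR hB h2)

/-- Equivariance of the intensional semantics under left reassociation. -/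
lemma istep_assocR {env : Env} {Γ : Graph} {s : Sys} {α : NAct} {Δ : SDist Sys}
    (h : IStep env Γ s α Δ) : IStep env Γ (assocR s) α (push assocR Δ) := by
  cases s with
  | nil =>
      cases h with
      | inil => rw [push_dirac']; exact .inil
  | node n t =>
      cases h with
      | broad h' => rw [push_push]; exact .broad h'
      | recv h' hE => rw [push_push]; exact .recv h' hE
      | deaf h' => rw [push_dirac']; exact .deaf h'
      | disc h' => rw [push_dirac']; exact .disc h'
      | taun h' => rw [push_push]; exact .taun h'
  | par A X =>
    have fix : ∀ {u v : Sys} {β Θ}, NotPar v → IStep env Γ (.par u v) β Θ →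
        IStep env Γ (assocR (.par u v)) β (push assocR Θ) := by
      intro u v β Θ hv hst
      rw [assocR_fix u hv]
      cases hst with
      | taupL h' =>
          rw [push_assocR_fix (fun x hx => by rw [dirac_support hx]; exact hv)]
          exact .taupL h'
      | taupR h' => rw [push_assocR_fix (istep_notPar_support hv h')]; exact .taupR h'
      | prop h1 h2 => rw [push_assocR_fix (istep_notPar_support hv h2)]; exact .prop h1 h2
      | syncL h1 h2 => rw [push_assocR_fix (istep_notPar_support hv h2)]; exact .syncL h1 h2
      | syncR h1 h2 => rw [push_assocR_fix (istep_notPar_support hv h2)]; exact .syncR h1 h2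
    cases X with
    | nil => exact fix (fun a b h => by cases h) h
    | node n t => exact fix (fun a b h => by cases h) h
    | par B C =>
      cases h with
      | taupL hA =>
          rw [show dirac (Sys.par B C) = push2 .par (dirac B) (dirac C) from
            (push2_dirac_dirac _ _ _).symm, push2_reassoc' assocR (fun a b c => rfl)]
          exact .taupL (.taupL hA)
      | taupR h1 =>
          cases h1 with
          | taupL hB =>
              rw [push2_reassoc' assocR (fun a b c => rfl)]
              exact .taupL (.taupR hB)
          | taupR hC =>
              rw [push2_reassoc' assocR (fun a b c => rfl), push2_dirac_dirac]
              exact .taupR hC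
      | prop h1 h2 =>
          cases h2 with
          | prop hB hC =>
              rw [push2_reassoc' assocR (fun a b c => rfl)]
              exact .prop (.prop h1 hB) hC
      | syncL h1 h2 =>
          cases h2 with
          | prop hB hC =>
              rw [push2_reassoc' assocR (fun a b c => rfl)]
              exact .syncL (.syncL h1 hB) hC
      | syncR h1 h2 =>
          cases h2 with
          | syncL hB hC =>
              rw [push2_reassoc' assocR (fun a b c => rfl)]
              exact .syncL (.syncR h1 hB) hC
          | syncR hB hC =>
              rw [push2_reassoc' assocR (fun a b c => rfl)]
              exact .syncR (.prop h1 hB) hC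

end Assoc

section Transfer

variable {env : Env}

lemma succ_congr {s t : Sys} (h : PCong env s t) :
    Successful env s ↔ Successful env t := by
  constructor
  · rintro ⟨M', n, u, hc⟩; exact ⟨M', n, u, (PCong.symm h).trans hc⟩
  · rintro ⟨M', n, u, hc⟩; exact ⟨M', n, u, h.trans hc⟩

lemma pcong_assocL (s : Sys) : PCong env s (assocL s) := by
  cases s with
  | par X C =>
      cases X with
      | par A B => exact PCong.assoc A B C
      | nil => exact PCong.refl _
      | node n t => exact PCong.refl _
  | nil => exact PCong.refl _
  | node n t => exact PCong.refl _

lemma pcong_assocR (s : Sys) : PCong env s (assocR s) := by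
  cases s with
  | par A X =>
      cases X with
      | par B C => exact PCong.symm (PCong.assoc A B C)
      | nil => exact PCong.refl _
      | node n t => exact PCong.refl _
  | nil => exact PCong.refl _
  | node n t => exact PCong.refl _

lemma succ_assocL (s : Sys) : Successful env (assocL s) ↔ Successful env s :=
  (succ_congr (pcong_assocL s)).symm

lemma succ_assocR (s : Sys) : Successful env (assocR s) ↔ Successful env s :=
  (succ_congr (pcong_assocR s)).symm

lemma istep_assocL_rev {Γ : Graph} {s : Sys} {α : NAct} {Θ : SDist Sys}
    (h : IStep env Γ (assocL s) α Θ) : ∃ Θ', IStep env Γ s α Θ' := by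
  cases s with
  | par X C =>
      cases X with
      | par A B => exact ⟨_, by simpa using istep_assocR h⟩
      | nil => exact ⟨Θ, h⟩
      | node n t => exact ⟨Θ, h⟩
  | nil => exact ⟨Θ, h⟩
  | node n t => exact ⟨Θ, h⟩

lemma istep_assocR_rev {Γ : Graph} {s : Sys} {α : NAct} {Θ : SDist Sys}
    (h : IStep env Γ (assocR s) α Θ) : ∃ Θ', IStep env Γ s α Θ' := by
  cases s with
  | par A X =>
      cases X with
      | par B C => exact ⟨_, by simpa using istep_assocL h⟩
      | nil => exact ⟨Θ, h⟩
      | node n t => exact ⟨Θ, h⟩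
  | nil => exact ⟨Θ, h⟩
  | node n t => exact ⟨Θ, h⟩

/-- Lift a function on system terms to networks, keeping the connectivity graph. -/
def FF (f : Sys → Sys) : Net → Net := fun K => ⟨K.g, f K.sys⟩

lemma netD_push {f : Sys → Sys} (Γ : Graph) (Θ : SDist Sys) :
    push (FF f) (netD Γ Θ) = netD Γ (push f Θ) := by
  unfold netD
  rw [push_push, push_push]
  rfl

lemma red_push {f : Sys → Sys}
    (hf : ∀ (Γ : Graph) s α Θ, IStep env Γ s α Θ → IStep env Γ (f s) α (push f Θ))
    {K : Net} {Δ : SDist Net} (h : Red env K Δ) : Red env (FF f K) (push (FF f) Δ) := by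
  obtain ⟨Θ, rfl, hΘ⟩ := h
  refine ⟨push f Θ, netD_push K.g Θ, ?_⟩
  rcases hΘ with ⟨m, hm⟩ | ⟨m, c, v, hm⟩
  · exact Or.inl ⟨m, hf _ _ _ _ hm⟩
  · exact Or.inr ⟨m, c, v, hf _ _ _ _ hm⟩

lemma red_rev {f : Sys → Sys}
    (hrev : ∀ (Γ : Graph) s α Θ, IStep env Γ (f s) α Θ → ∃ Θ', IStep env Γ s α Θ')
    {K : Net} {Δ : SDist Net} (h : Red env (FF f K) Δ) : ∃ Δ', Red env K Δ' := by
  obtain ⟨Θ, _, hΘ⟩ := h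
  rcases hΘ with ⟨m, hm⟩ | ⟨m, c, v, hm⟩
  · obtain ⟨Θ', h'⟩ := hrev _ _ _ _ hm
    exact ⟨netD K.g Θ', Θ', rfl, Or.inl ⟨m, h'⟩⟩
  · obtain ⟨Θ', h'⟩ := hrev _ _ _ _ hm
    exact ⟨netD K.g Θ', Θ', rfl, Or.inr ⟨m, c, v, h'⟩⟩

lemma lift_push {α : Type} {R : α → SDist α → Prop} (F : α → α)
    (hR : ∀ a Δ, R a Δ → R (F a) (push F Δ)) {Δ Θ : SDist α} (h : Lift R Δ Θ) :
    Lift R (push F Δ) (push F Θ) := by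
  induction h with
  | single h => rw [push_dirac']; exact .single (hR _ _ h)
  | sum p Δ Θ hp h ih =>
      rw [push_finsum, push_finsum]
      exact .sum p _ _ hp ih

lemma value_push {f : Sys → Sys}
    (hs : ∀ s, Successful env (f s) ↔ Successful env s) (Δ : SDist Net) :
    Value env (push (FF f) Δ) = Value env Δ := by
  unfold Value
  calc (∑' N, if NetSucc env N then push (FF f) Δ N else 0)
      = ∑' (N : Net) (L : Net),
          if NetSucc env N then (if FF f L = N then Δ L else 0) else 0 := by
        refine tsum_congr fun N => ?_
        split
        · rfl
        · simp
    _ = ∑' (L : Net) (N : Net),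
          if NetSucc env N then (if FF f L = N then Δ L else 0) else 0 :=
        ENNReal.tsum_comm
    _ = ∑' (L : Net), if NetSucc env (FF f L) then Δ L else 0 := by
        refine tsum_congr fun L => ?_
        rw [tsum_eq_single (FF f L) fun N hN => by
          split
          · rw [if_neg fun h => hN h.symm]
          · rfl]
        split <;> simp
    _ = ∑' (L : Net), if NetSucc env L then Δ L else 0 := by
        refine tsum_congr fun L => ?_
        exact if_congr (hs L.sys) rfl rfl

lemma gextreme_push {f : Sys → Sys}
    (hf : ∀ (Γ : Graph) s α Θ, IStep env Γ s α Θ → IStep env Γ (f s) α (push f Θ))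
    (hrev : ∀ (Γ : Graph) s α Θ, IStep env Γ (f s) α Θ → ∃ Θ', IStep env Γ s α Θ')
    (hs : ∀ s, Successful env (f s) ↔ Successful env s)
    {Δ Δ' : SDist Net} (h : GExtreme (Red env) (NetSucc env) Δ Δ') :
    GExtreme (Red env) (NetSucc env) (push (FF f) Δ) (push (FF f) Δ') := by
  obtain ⟨⟨go, halt, h0, hstep, hns, hres⟩, hext⟩ := h
  have hΔ : Δ = fun a => go 0 a + halt 0 a := funext h0
  have hΔ' : Δ' = fun a => ∑' k, halt k a := funext hres
  refine ⟨⟨fun k => push (FF f) (go k), fun k => push (FF f) (halt k), ?_, ?_, ?_, ?_⟩, ?_⟩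
  · intro a
    rw [hΔ, push_add]
  · intro k
    have := lift_push (FF f) (fun a Δ h => red_push hf h) (hstep k)
    rwa [push_add] at this
  · intro k a ha hsucc
    obtain ⟨L, hL, rfl⟩ := push_support ha
    exact hns k L hL ((hs L.sys).1 hsucc)
  · intro a
    rw [hΔ', push_tsum]
  · intro a ha hΘ
    obtain ⟨L, hL, rfl⟩ := push_support ha
    obtain ⟨Θ, hΘ'⟩ := hΘ
    obtain ⟨Θ', h'⟩ := red_rev hrev hΘ'
    exact (hs L.sys).2 (hext L hL ⟨Θ', h'⟩)

lemma results_mono {f : Sys → Sys}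
    (hf : ∀ (Γ : Graph) s α Θ, IStep env Γ s α Θ → IStep env Γ (f s) α (push f Θ))
    (hrev : ∀ (Γ : Graph) s α Θ, IStep env Γ (f s) α Θ → ∃ Θ', IStep env Γ s α Θ')
    (hs : ∀ s, Successful env (f s) ↔ Successful env s)
    (Δ : SDist Net) : Results env Δ ⊆ Results env (push (FF f) Δ) := by
  rintro v ⟨Δ', hE, rfl⟩
  exact ⟨push (FF f) Δ', gextreme_push hf hrev hs hE, (value_push hs Δ').symm⟩

lemma results_assoc (Γ : Graph) (A B C : Sys) :
    Results env (dirac ⟨Γ, .par (.par A B) C⟩) = Results env (dirac ⟨Γ, .par A (.par B C)⟩) := by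
  apply Set.Subset.antisymm
  · have := results_mono (env := env) (f := assocL) (fun Γ s α Θ h => istep_assocL h)
      (fun Γ s α Θ h => istep_assocL_rev h) succ_assocL
      (dirac (⟨Γ, .par (.par A B) C⟩ : Net))
    rwa [push_dirac'] at this
  · have := results_mono (env := env) (f := assocR) (fun Γ s α Θ h => istep_assocR h)
      (fun Γ s α Θ h => istep_assocR_rev h) succ_assocR
      (dirac (⟨Γ, .par A (.par B C)⟩ : Net))
    rwa [push_dirac'] at this

end Transfer

section Structural

lemma nodes_comp (M N : Net) : (M.comp N).nodes = M.nodes ∪ N.nodes := by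
  show ((Sys.par M.sys N.sys).nodesM).toFinset = _
  show (M.sys.nodesM + N.sys.nodesM).toFinset = _
  exact Multiset.toFinset_add _ _

lemma graph_union_assoc (Γ₁ Γ₂ Γ₃ : Graph) :
    (Γ₁.union Γ₂).union Γ₃ = Γ₁.union (Γ₂.union Γ₃) := by
  simp [Graph.union, Finset.union_assoc]

lemma comp_wf {M N : Net} (hM : M.wf) (hN : N.wf) (hD : M.Defined N) : (M.comp N).wf := by
  obtain ⟨⟨⟨hMe, hMi⟩, hMnd, hMsub⟩, hMedge, hMiso⟩ := hM
  obtain ⟨⟨⟨hNe, hNi⟩, hNnd, hNsub⟩, hNedge, hNiso⟩ := hN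
  have hdisj : ∀ x, x ∈ M.nodes → x ∉ N.nodes := fun x hx hx' =>
    hD x hx (hNsub hx')
  refine ⟨⟨⟨?_, ?_⟩, ?_, ?_⟩, ?_, ?_⟩
  · intro e he
    rcases Finset.mem_union.1 he with h | h
    · exact ⟨Finset.mem_union_left _ (hMe e h).1, Finset.mem_union_left _ (hMe e h).2⟩
    · exact ⟨Finset.mem_union_right _ (hNe e h).1, Finset.mem_union_right _ (hNe e h).2⟩
  · intro e he
    rcases Finset.mem_union.1 he with h | h
    · exact hMi e h
    · exact hNi e h
  · show (M.sys.nodesM + N.sys.nodesM).Nodup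
    rw [Multiset.nodup_add]
    refine ⟨hMnd, hNnd, Multiset.disjoint_left.2 ?_⟩
    intro a ha ha'
    exact hdisj a (Multiset.mem_toFinset.2 ha) (Multiset.mem_toFinset.2 ha')
  · rw [nodes_comp]
    exact Finset.union_subset_union hMsub hNsub
  · intro e he
    rw [nodes_comp]
    rcases Finset.mem_union.1 he with h | h
    · rcases hMedge e h with h' | h'
      · exact Or.inl (Finset.mem_union_left _ h')
      · exact Or.inr (Finset.mem_union_left _ h')
    · rcases hNedge e h with h' | h'
      · exact Or.inl (Finset.mem_union_right _ h')
      · exact Or.inr (Finset.mem_union_right _ h')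
  · intro v hv hve
    rw [nodes_comp]
    rcases Finset.mem_union.1 hv with h | h
    · refine Finset.mem_union_left _ (hMiso v h fun w => ?_)
      exact ⟨fun hw => (hve w).1 (Finset.mem_union_left _ hw),
        fun hw => (hve w).2 (Finset.mem_union_left _ hw)⟩
    · refine Finset.mem_union_right _ (hNiso v h fun w => ?_)
      exact ⟨fun hw => (hve w).1 (Finset.mem_union_right _ hw),
        fun hw => (hve w).2 (Finset.mem_union_right _ hw)⟩

lemma mem_inp_comp {M N : Net} (hM : M.wf) (hN : N.wf) (x : Name) :
    x ∈ (M.comp N).inp ↔ (x ∈ M.inp ∧ x ∉ N.nodes) ∨ (x ∈ N.inp ∧ x ∉ M.nodes) := by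
  constructor
  · rintro ⟨hint, m, hm, hE⟩
    rw [Net.interf, Finset.mem_sdiff, nodes_comp, Finset.mem_union] at hint
    obtain ⟨hV, hnn⟩ := hint
    push_neg at hnn
    rcases Finset.mem_union.1 hE with h | h
    · refine Or.inl ⟨⟨Finset.mem_sdiff.2 ⟨(hM.1.1.1 _ h).1, hnn.1⟩, m, ?_, h⟩, hnn.2⟩
      rcases hM.2.1 _ h with h' | h'
      · exact absurd h' hnn.1
      · exact h'
    · refine Or.inr ⟨⟨Finset.mem_sdiff.2 ⟨(hN.1.1.1 _ h).1, hnn.2⟩, m, ?_, h⟩, hnn.1⟩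
      rcases hN.2.1 _ h with h' | h'
      · exact absurd h' hnn.2
      · exact h'
  · rintro (⟨⟨hint, m, hm, hE⟩, hxN⟩ | ⟨⟨hint, m, hm, hE⟩, hxM⟩)
    · obtain ⟨hV, hxn⟩ := Finset.mem_sdiff.1 hint
      refine ⟨Finset.mem_sdiff.2 ⟨Finset.mem_union_left _ hV, ?_⟩, m,
        by rw [nodes_comp]; exact Finset.mem_union_left _ hm, Finset.mem_union_left _ hE⟩
      rw [nodes_comp, Finset.mem_union]
      rintro (h | h)
      · exact hxn h
      · exact hxN h
    · obtain ⟨hV, hxn⟩ := Finset.mem_sdiff.1 hint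
      refine ⟨Finset.mem_sdiff.2 ⟨Finset.mem_union_right _ hV, ?_⟩, m,
        by rw [nodes_comp]; exact Finset.mem_union_right _ hm, Finset.mem_union_right _ hE⟩
      rw [nodes_comp, Finset.mem_union]
      rintro (h | h)
      · exact hxM h
      · exact hxn h

lemma mem_out_comp {M N : Net} (hM : M.wf) (hN : N.wf) (x : Name) :
    x ∈ (M.comp N).out ↔ (x ∈ M.out ∧ x ∉ N.nodes) ∨ (x ∈ N.out ∧ x ∉ M.nodes) := by
  constructor
  · rintro ⟨hint, m, hm, hE⟩
    rw [Net.interf, Finset.mem_sdiff, nodes_comp, Finset.mem_union] at hint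
    obtain ⟨hV, hnn⟩ := hint
    push_neg at hnn
    rcases Finset.mem_union.1 hE with h | h
    · refine Or.inl ⟨⟨Finset.mem_sdiff.2 ⟨(hM.1.1.1 _ h).2, hnn.1⟩, m, ?_, h⟩, hnn.2⟩
      rcases hM.2.1 _ h with h' | h'
      · exact h'
      · exact absurd h' hnn.1
    · refine Or.inr ⟨⟨Finset.mem_sdiff.2 ⟨(hN.1.1.1 _ h).2, hnn.2⟩, m, ?_, h⟩, hnn.1⟩
      rcases hN.2.1 _ h with h' | h'
      · exact h'
      · exact absurd h' hnn.2
  · rintro (⟨⟨hint, m, hm, hE⟩, hxN⟩ | ⟨⟨hint, m, hm, hE⟩, hxM⟩)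
    · obtain ⟨hV, hxn⟩ := Finset.mem_sdiff.1 hint
      refine ⟨Finset.mem_sdiff.2 ⟨Finset.mem_union_left _ hV, ?_⟩, m,
        by rw [nodes_comp]; exact Finset.mem_union_left _ hm, Finset.mem_union_left _ hE⟩
      rw [nodes_comp, Finset.mem_union]
      rintro (h | h)
      · exact hxn h
      · exact hxN h
    · obtain ⟨hV, hxn⟩ := Finset.mem_sdiff.1 hint
      refine ⟨Finset.mem_sdiff.2 ⟨Finset.mem_union_right _ hV, ?_⟩, m,
        by rw [nodes_comp]; exact Finset.mem_union_right _ hm, Finset.mem_union_right _ hE⟩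
      rw [nodes_comp, Finset.mem_union]
      rintro (h | h)
      · exact hxM h
      · exact hxn h

lemma notMem_of_inp {N M : Net} (hD : M.Defined N) {x : Name} (hx : x ∈ N.inp) :
    x ∉ M.nodes := fun hm => hD x hm (Finset.mem_sdiff.1 hx.1).1

lemma notMem_of_out {N M : Net} (hD : M.Defined N) {x : Name} (hx : x ∈ N.out) :
    x ∉ M.nodes := fun hm => hD x hm (Finset.mem_sdiff.1 hx.1).1

end Structural


/-- The may- and must-testing preorders are compositional with respect
to the extension operator `⊛`. -/
theorem testing_compositional (env : Env) (M₁ M₂ N : Net) (hN : N.wf)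
    (h₁ : M₁.Defined N) (h₂ : M₂.Defined N) :
    (MayLe env M₁ M₂ → MayLe env (M₁.comp N) (M₂.comp N)) ∧
    (MustLe env M₁ M₂ → MustLe env (M₁.comp N) (M₂.comp N)) := by
  have key : ∀ (M T : Net),
      Results env (dirac ((M.comp N).comp T)) = Results env (dirac (M.comp (N.comp T))) := by
    intro M T
    have hg : (M.comp N).comp T =
        (⟨M.g.union (N.g.union T.g), .par (.par M.sys N.sys) T.sys⟩ : Net) := by
      show (⟨(M.g.union N.g).union T.g, .par (.par M.sys N.sys) T.sys⟩ : Net) = _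
      rw [graph_union_assoc]
    rw [hg]
    exact results_assoc _ _ _ _
  have inpEq : ∀ {M₁' M₂' : Net}, M₁'.wf → M₂'.wf → M₁'.Defined N → M₂'.Defined N →
      M₁'.inp = M₂'.inp → (M₁'.comp N).inp = (M₂'.comp N).inp := by
    intro M₁' M₂' w₁ w₂ hd₁ hd₂ hi
    ext x
    rw [mem_inp_comp w₁ hN, mem_inp_comp w₂ hN, hi]
    constructor
    · rintro (h | ⟨h, _⟩)
      · exact Or.inl h
      · exact Or.inr ⟨h, notMem_of_inp hd₂ h⟩
    · rintro (h | ⟨h, _⟩)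
      · exact Or.inl h
      · exact Or.inr ⟨h, notMem_of_inp hd₁ h⟩
  have outEq : ∀ {M₁' M₂' : Net}, M₁'.wf → M₂'.wf → M₁'.Defined N → M₂'.Defined N →
      M₁'.out = M₂'.out → (M₁'.comp N).out = (M₂'.comp N).out := by
    intro M₁' M₂' w₁ w₂ hd₁ hd₂ ho
    ext x
    rw [mem_out_comp w₁ hN, mem_out_comp w₂ hN, ho]
    constructor
    · rintro (h | ⟨h, _⟩)
      · exact Or.inl h
      · exact Or.inr ⟨h, notMem_of_out hd₂ h⟩
    · rintro (h | ⟨h, _⟩)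
      · exact Or.inl h
      · exact Or.inr ⟨h, notMem_of_out hd₁ h⟩
  have defs : ∀ (M T : Net), M.Defined N → (M.comp N).Defined T →
      N.Defined T ∧ M.Defined (N.comp T) := by
    intro M T hMN0 hD
    have hNT : N.Defined T := fun n hn =>
      hD n (by rw [nodes_comp]; exact Finset.mem_union_right _ hn)
    refine ⟨hNT, fun n hn => ?_⟩
    have hMT : n ∉ T.g.V := hD n (by rw [nodes_comp]; exact Finset.mem_union_left _ hn)
    have hMN : n ∉ N.g.V := hMN0 n hn
    show n ∉ (N.g.union T.g).V
    simp only [Graph.union, Finset.mem_union]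
    rintro (h | h)
    · exact hMN h
    · exact hMT h
  constructor
  · rintro ⟨w₁, w₂, hi, ho, hT⟩
    refine ⟨comp_wf w₁ hN h₁, comp_wf w₂ hN h₂, inpEq w₁ w₂ h₁ h₂ hi,
      outEq w₁ w₂ h₁ h₂ ho, ?_⟩
    intro T hTwf hD₁ hD₂
    obtain ⟨hNT, hM₁d⟩ := defs M₁ T h₁ hD₁
    obtain ⟨_, hM₂d⟩ := defs M₂ T h₂ hD₂
    have := hT (N.comp T) (comp_wf hN hTwf hNT) hM₁d hM₂d
    rwa [← key M₁ T, ← key M₂ T] at this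
  · rintro ⟨w₁, w₂, hi, ho, hT⟩
    refine ⟨comp_wf w₁ hN h₁, comp_wf w₂ hN h₂, inpEq w₁ w₂ h₁ h₂ hi,
      outEq w₁ w₂ h₁ h₂ ho, ?_⟩
    intro T hTwf hD₁ hD₂
    obtain ⟨hNT, hM₁d⟩ := defs M₁ T h₁ hD₁
    obtain ⟨_, hM₂d⟩ := defs M₂ T h₂ hD₂
    have := hT (N.comp T) (comp_wf hN hTwf hNT) hM₁d hM₂d
    rwa [← key M₁ T, ← key M₂ T] at this

end PBC
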